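/- If Σ is a consistent set of equations admitting a Mal'cev term m (Σ ⊢ m(x,y,y) ≈ x and Σ ⊢ m(x,x,y) ≈ y, and V(Σ) contains an algebra with two or more elements), then the free-algebra functor F_Σ does not preserve preimages, i.e. Σ ⊬ Σ'. -/

import Mathlib

universe u

/-- A finitary algebraic signature. -/
structure Sig where
  ops : Type
  ar : ops → ℕ

namespace UA

/-- Terms over the signature `S` with variables from `X`. -/
inductive Term (S : Sig) (X : Type) : Type where
  | var : X → Term S X
  | app : (o : S.ops) → (Fin (S.ar o) → Term S X) → Term S X

/-- Simultaneous substitution of terms for variables. -/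
def Term.subst {S : Sig} {X Y : Type} (σ : X → Term S Y) : Term S X → Term S Y
  | .var x => σ x
  | .app o ts => .app o fun i => (ts i).subst σ

/-- Renaming (substitution of variables for variables). -/
def Term.rename {S : Sig} {X Y : Type} (φ : X → Y) (t : Term S X) : Term S Y :=
  t.subst fun x => .var (φ x)

/-- Equational provability from the set `Γ` of axioms (pairs of terms over the
countable variable set `ℕ`), over arbitrary variable sets. -/
inductive Eqv {S : Sig} (Γ : Set (Term S ℕ × Term S ℕ)) :
    {X : Type} → Term S X → Term S X → Prop where
  | axm {X : Type} {l r : Term S ℕ} (h : (l, r) ∈ Γ) (σ : ℕ → Term S X) :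
      Eqv Γ (l.subst σ) (r.subst σ)
  | refl {X : Type} (t : Term S X) : Eqv Γ t t
  | symm {X : Type} {t u : Term S X} : Eqv Γ t u → Eqv Γ u t
  | trans {X : Type} {t u v : Term S X} : Eqv Γ t u → Eqv Γ u v → Eqv Γ t v
  | congr {X : Type} (o : S.ops) {ts us : Fin (S.ar o) → Term S X} :
      (∀ i, Eqv Γ (ts i) (us i)) → Eqv Γ (.app o ts) (.app o us)
  | sbst {X Y : Type} {t u : Term S X} (σ : X → Term S Y) :
      Eqv Γ t u → Eqv Γ (t.subst σ) (u.subst σ)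

def termSetoid {S : Sig} (Γ : Set (Term S ℕ × Term S ℕ)) (X : Type) : Setoid (Term S X) :=
  ⟨Eqv Γ, ⟨fun t => .refl t, fun h => h.symm, fun h h' => h.trans h'⟩⟩

/-- The free algebra over the variable set `X` in the variety axiomatized by `Γ`:
terms modulo `Γ`-provable equality.  This is the object part of the free-algebra
functor `F_Σ`. -/
def FreeAlg {S : Sig} (Γ : Set (Term S ℕ × Term S ℕ)) (X : Type) : Type :=
  Quotient (termSetoid Γ X)

/-- The action of the free-algebra functor `F_Σ` on maps: variable substitution. -/
def FreeAlg.map {S : Sig} {Γ : Set (Term S ℕ × Term S ℕ)} {X Y : Type} (φ : X → Y) :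
    FreeAlg Γ X → FreeAlg Γ Y :=
  Quotient.map (Term.rename φ) fun _ _ h => h.sbst _

end UA

namespace UA

variable {S : Sig}

/-- Weak independence of the first variable position (see Dent–Kearnes–Szendrei). -/
def WeakIndep (Γ : Set (Term S ℕ × Term S ℕ)) {n : ℕ} (p : Term S (Fin (n + 1))) : Prop :=
  ∃ (x y : ℕ) (v : Fin n → ℕ) (q : Term S Unit),
    x ≠ y ∧ Eqv Γ (p.rename (Fin.cases x v)) (q.rename fun _ => y)

/-- The derivative `Σ'` of `Σ`: all independence equations
`p(x, z₁, …, zₙ) ≈ p(y, z₁, …, zₙ)` (variables distinct) for terms `p` weakly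
independent of the occurrence `x`. -/
def Deriv (Γ : Set (Term S ℕ × Term S ℕ)) : Set (Term S ℕ × Term S ℕ) :=
  { e | ∃ (n : ℕ) (p : Term S (Fin (n + 1))), WeakIndep Γ p ∧
        e = (p.rename (Fin.cases 0 fun i => (i : ℕ) + 2),
             p.rename (Fin.cases 1 fun i => (i : ℕ) + 2)) }

/-- The free-algebra functor preserves preimages. -/
def PreservesPreimages (Γ : Set (Term S ℕ × Term S ℕ)) : Prop :=
  ∀ (X Y : Type) (φ : X → Y) (V : Set Y) (t : FreeAlg Γ X),
    FreeAlg.map φ t ∈ Set.range (FreeAlg.map (Γ := Γ) (Subtype.val : V → Y)) →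
      t ∈ Set.range (FreeAlg.map (Γ := Γ) (Subtype.val : (φ ⁻¹' V) → X))

/-! The Mal'cev term `m` is weakly independent of its first argument, since `m(x,x,y) ≈ y`.
If `F_Σ` preserves preimages, every weakly independent term `p` is independent: from
`p(x, v̄) ≈ q(y)` with `x ≠ y`, preservation of the preimage of `{y}` under `p ↦ p(x, v̄)`
writes `p` as a term avoiding its first variable. But independence of `m` collapses the
theory: `x ≈ m(x,y,y) ≈ m(y,y,y) ≈ y`. -/

section

variable {Γ : Set (Term S ℕ × Term S ℕ)}

theorem Term.subst_subst {X Y Z : Type} (σ : X → Term S Y) (τ : Y → Term S Z)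
    (t : Term S X) : (t.subst σ).subst τ = t.subst fun x => (σ x).subst τ := by
  induction t with
  | var x => rfl
  | app o ts ih => simp only [Term.subst, ih]

theorem Term.rename_rename {X Y Z : Type} (f : X → Y) (g : Y → Z) (t : Term S X) :
    (t.rename f).rename g = t.rename (g ∘ f) :=
  Term.subst_subst _ _ t

theorem Eqv.rename {X Y : Type} {t u : Term S X} (f : X → Y) (h : Eqv Γ t u) :
    Eqv Γ (t.rename f) (u.rename f) :=
  h.sbst _

theorem PreservesPreimages.exists_eqv_rename_val (h : PreservesPreimages Γ)
    {X Y : Type} (φ : X → Y) (V : Set Y) (t : Term S X)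
    (u : Term S V) (htu : Eqv Γ (t.rename φ) (u.rename Subtype.val)) :
    ∃ s : Term S (φ ⁻¹' V), Eqv Γ t (s.rename Subtype.val) := by
  obtain ⟨s', hs'⟩ := h X Y φ V ⟦t⟧ ⟨⟦u⟧, Quotient.sound htu.symm⟩
  obtain ⟨s, rfl⟩ := Quotient.exists_rep s'
  exact ⟨s, (Quotient.exact hs').symm⟩

theorem PreservesPreimages.eqv_rename_of_weakIndep (h : PreservesPreimages Γ)
    {n : ℕ} {p : Term S (Fin (n + 1))} (hp : WeakIndep Γ p)
    {Z : Type} (f g : Fin (n + 1) → Z) (hfg : ∀ i : Fin n, f i.succ = g i.succ) :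
    Eqv Γ (p.rename f) (p.rename g) := by
  obtain ⟨x, y, v, q, hxy, hpq⟩ := hp
  obtain ⟨s, hs⟩ := h.exists_eqv_rename_val (Fin.cases x v) {y} p
    (q.rename fun _ => ⟨y, rfl⟩) (by rwa [Term.rename_rename])
  have hfg' : (f ∘ Subtype.val : (Fin.cases x v ⁻¹' ({y} : Set ℕ)) → Z) = g ∘ Subtype.val := by
    funext ⟨i, hi⟩
    cases i using Fin.cases with
    | zero => exact absurd hi hxy
    | succ i => exact hfg i
  have hf := hs.rename f
  rw [Term.rename_rename, hfg', ← Term.rename_rename] at hf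
  exact hf.trans (hs.rename g).symm

theorem PreservesPreimages.eqv_of_mem_deriv (h : PreservesPreimages Γ)
    {e : Term S ℕ × Term S ℕ} (he : e ∈ Deriv Γ) :
    Eqv Γ e.1 e.2 := by
  obtain ⟨n, p, hp, rfl⟩ := he
  exact h.eqv_rename_of_weakIndep hp _ _ fun _ => rfl

variable {m : Term S (Fin 3)}

theorem weakIndep_of_malcev (hm₂ : Eqv Γ (m.rename ![0, 0, 1]) (Term.var 1 : Term S ℕ)) :
    WeakIndep Γ m :=
  ⟨0, 1, ![0, 1], .var (), zero_ne_one, hm₂⟩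

theorem eqv_var_zero_var_one_of_malcev_of_indep
    (hm₁ : Eqv Γ (m.rename ![0, 1, 1]) (Term.var 0 : Term S ℕ))
    (hm₂ : Eqv Γ (m.rename ![0, 0, 1]) (Term.var 1 : Term S ℕ))
    (hindep : Eqv Γ (m.rename (Fin.cases 0 fun i => (i : ℕ) + 2))
      (m.rename (Fin.cases 1 fun i => (i : ℕ) + 2))) :
    Eqv Γ (Term.var 0 : Term S ℕ) (Term.var 1) := by
  have h₁₁₁ : Eqv Γ (m.rename ![1, 1, 1]) (Term.var 1 : Term S ℕ) := by
    convert hm₂.rename (fun _ => (1 : ℕ)) using 1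
    · rw [Term.rename_rename]; congr 1; funext i; fin_cases i <;> rfl
    · rfl
  have h₀₁₁ : Eqv Γ (m.rename ![0, 1, 1]) (m.rename ![1, 1, 1]) := by
    convert hindep.rename (fun k => if k = 0 then 0 else 1) using 1 <;>
      rw [Term.rename_rename] <;> congr 1 <;> funext i <;> fin_cases i <;> rfl
  exact hm₁.symm.trans (h₀₁₁.trans h₁₁₁)

end

/-- If `Σ` is consistent and admits a Mal'cev term, then `Σ ⊬ Σ'`, i.e. the
free-algebra functor `F_Σ` does not preserve preimages. -/
theorem malcev_implies_not_preservesPreimages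
    (Γ : Set (Term S ℕ × Term S ℕ))
    (hcons : ¬ Eqv Γ (Term.var 0 : Term S ℕ) (Term.var 1))
    (m : Term S (Fin 3))
    (hm₁ : Eqv Γ (m.rename ![0, 1, 1]) (Term.var 0 : Term S ℕ))
    (hm₂ : Eqv Γ (m.rename ![0, 0, 1]) (Term.var 1 : Term S ℕ)) :
    (¬ ∀ e ∈ Deriv Γ, Eqv Γ e.1 e.2) ∧ ¬ PreservesPreimages Γ := by
  have hnot_deriv : ¬ ∀ e ∈ Deriv Γ, Eqv Γ e.1 e.2 := fun hderiv =>
    hcons <| eqv_var_zero_var_one_of_malcev_of_indep hm₁ hm₂ <|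
      hderiv _ ⟨2, m, weakIndep_of_malcev hm₂, rfl⟩
  exact ⟨hnot_deriv, fun hpres => hnot_deriv fun _ => hpres.eqv_of_mem_deriv⟩

end UA
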